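/- Download cost lower bound from secrecy: suppose W has H(W) = L, answers A_n satisfy H(A_n | S_n) = 0 for each n, H(W | (A_n)_{n∈[N]\D}) = 0, and for every subset X ⊆ [N]\D with |X| = R_r - K_c one has I(W; (S_n)_{n∈X}) = 0. Then Σ_{n∈[N]\D} H(A_n) ≥ L·(N-|D|)/(N-R_r+K_c-|D|). -/

import Mathlib

open scoped BigOperators

/-- `p` is a probability mass function on the finite sample space `Ω`. -/
def IsPMF {Ω : Type} [Fintype Ω] (p : Ω → ℝ) : Prop :=
  (∀ ω, 0 ≤ p ω) ∧ ∑ ω : Ω, p ω = 1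

open Classical in
/-- Probability of the event `E` under the pmf `p`. -/
noncomputable def probEvent {Ω : Type} [Fintype Ω] (p : Ω → ℝ) (E : Ω → Prop) : ℝ :=
  ∑ ω : Ω, if E ω then p ω else 0

/-- Shannon entropy (base `b`) of the random variable `X` under the pmf `p`. -/
noncomputable def entH {Ω α : Type} [Fintype Ω] [Fintype α]
    (b : ℝ) (p : Ω → ℝ) (X : Ω → α) : ℝ :=
  -∑ x : α, probEvent p (fun ω => X ω = x) * Real.logb b (probEvent p (fun ω => X ω = x))

/-- Conditional entropy `H(X | Y) = H(X,Y) - H(Y)`. -/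
noncomputable def condH {Ω α β : Type} [Fintype Ω] [Fintype α] [Fintype β]
    (b : ℝ) (p : Ω → ℝ) (X : Ω → α) (Y : Ω → β) : ℝ :=
  entH b p (fun ω => (X ω, Y ω)) - entH b p Y

/-- Mutual information `I(X;Y) = H(X) + H(Y) - H(X,Y)`. -/
noncomputable def mutI {Ω α β : Type} [Fintype Ω] [Fintype α] [Fintype β]
    (b : ℝ) (p : Ω → ℝ) (X : Ω → α) (Y : Ω → β) : ℝ :=
  entH b p X + entH b p Y - entH b p (fun ω => (X ω, Y ω))

/-- Conditional mutual information `I(X;Y | Z) = H(X|Z) - H(X|Y,Z)`. -/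
noncomputable def condMI {Ω α β δ : Type} [Fintype Ω] [Fintype α] [Fintype β] [Fintype δ]
    (b : ℝ) (p : Ω → ℝ) (X : Ω → α) (Y : Ω → β) (Z : Ω → δ) : ℝ :=
  condH b p X Z - condH b p X (fun ω => (Y ω, Z ω))

/-- `X` and `Y` are independent random variables under `p`. -/
def IndepRV {Ω α β : Type} [Fintype Ω] [Fintype α] [Fintype β]
    (p : Ω → ℝ) (X : Ω → α) (Y : Ω → β) : Prop :=
  ∀ x y, probEvent p (fun ω => X ω = x ∧ Y ω = y)
    = probEvent p (fun ω => X ω = x) * probEvent p (fun ω => Y ω = y)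

/-- `X` is uniformly distributed under `p`. -/
def IsUniform {Ω α : Type} [Fintype Ω] [Fintype α] (p : Ω → ℝ) (X : Ω → α) : Prop :=
  ∀ x, probEvent p (fun ω => X ω = x) = ((Fintype.card α : ℝ))⁻¹

/-!
Let `E = [N] \ D` and let `X ⊆ E` consist of `R_r - K_c` servers whose answers have the largest
entropies. Secrecy gives `H(W) + H(S_X) = H(W, S_X)`. Each `A_n` is almost surely a function of
`S_n` and `W` is almost surely a function of `A_E`, so `W` is a function of `(S_X, A_{E \ X})` and
`H(W) + H(S_X) ≤ H(W, S_X, A_{E \ X}) = H(S_X, A_{E \ X}) ≤ H(S_X) + ∑_{n ∈ E \ X} H(A_n)`.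
Thus `L ≤ ∑_{n ∈ E \ X} H(A_n)`, and by the choice of `X` this sum is at most the fraction
`(|E| - |X|) / |E|` of `∑_{n ∈ E} H(A_n)`.
-/

open Real Finset

section ProbEvent

variable {Ω : Type} [Fintype Ω] {p : Ω → ℝ}

lemma probEvent_nonneg (h0 : ∀ ω, 0 ≤ p ω) (E : Ω → Prop) : 0 ≤ probEvent p E := by
  classical
  unfold probEvent
  exact sum_nonneg fun ω _ => ite_nonneg (h0 ω) le_rfl

lemma probEvent_congr (h0 : ∀ ω, 0 ≤ p ω) {E F : Ω → Prop}
    (h : ∀ ω, 0 < p ω → (E ω ↔ F ω)) : probEvent p E = probEvent p F := by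
  classical
  refine sum_congr rfl fun ω _ => ?_
  rcases (h0 ω).eq_or_lt with hω | hω
  · simp [← hω]
  · exact if_congr (h ω hω) rfl rfl

lemma le_probEvent (h0 : ∀ ω, 0 ≤ p ω) {E : Ω → Prop} {ω : Ω} (hE : E ω) :
    p ω ≤ probEvent p E := by
  classical
  unfold probEvent
  simpa [hE] using single_le_sum (f := fun ω => if E ω then p ω else 0)
    (fun ω' _ => ite_nonneg (h0 ω') le_rfl) (mem_univ ω)

lemma probEvent_eq_sum_and {α : Type} [Fintype α] (X : Ω → α) (E : Ω → Prop) :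
    probEvent p E = ∑ x, probEvent p (fun ω => X ω = x ∧ E ω) := by
  classical
  unfold probEvent
  rw [sum_comm]
  refine sum_congr rfl fun ω _ => ?_
  by_cases hE : E ω <;> simp [hE]

lemma probEvent_comp_eq_sum {α β : Type} [Fintype α] [DecidableEq β] (f : α → β) (Z : Ω → α)
    (y : β) :
    probEvent p (fun ω => f (Z ω) = y) = ∑ z with f z = y, probEvent p (fun ω => Z ω = z) := by
  classical
  unfold probEvent
  rw [sum_comm]
  refine sum_congr rfl fun ω _ => ?_
  by_cases hy : f (Z ω) = y <;> simp [hy]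

lemma sum_probEvent_eq_one (hp : IsPMF p) {α : Type} [Fintype α] (X : Ω → α) :
    ∑ x, probEvent p (fun ω => X ω = x) = 1 := by
  rw [← hp.2, ← (show probEvent p (fun _ => True) = ∑ ω, p ω by simp [probEvent]),
    probEvent_eq_sum_and X]
  simp only [and_true]

lemma probEvent_le_one (hp : IsPMF p) (E : Ω → Prop) : probEvent p E ≤ 1 := by
  rw [← hp.2]
  exact sum_le_sum fun ω _ => by split_ifs <;> simp [hp.1 ω]

end ProbEvent

lemma neg_mul_log_le_negMulLog {a s : ℝ} (ha : 0 ≤ a) (has : a ≤ s) :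
    -(a * log s) ≤ negMulLog a := by
  rcases ha.eq_or_lt with rfl | ha
  · simp
  · have := log_le_log ha has
    rw [negMulLog]
    nlinarith

lemma negMulLog_sum_eq {ι : Type} (s : Finset ι) (a : ι → ℝ) :
    negMulLog (∑ i ∈ s, a i) = ∑ i ∈ s, -(a i * log (∑ j ∈ s, a j)) := by
  rw [negMulLog, neg_mul, sum_mul, sum_neg_distrib]

lemma negMulLog_sum_le {ι : Type} {s : Finset ι} {a : ι → ℝ} (ha : ∀ i ∈ s, 0 ≤ a i) :
    negMulLog (∑ i ∈ s, a i) ≤ ∑ i ∈ s, negMulLog (a i) := by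
  rw [negMulLog_sum_eq]
  exact sum_le_sum fun i hi => neg_mul_log_le_negMulLog (ha i hi) (single_le_sum ha hi)

lemma negMulLog_sum_lt {ι : Type} [DecidableEq ι] {s : Finset ι} {a : ι → ℝ}
    (ha : ∀ i ∈ s, 0 ≤ a i) {i j : ι} (hi : i ∈ s) (hj : j ∈ s) (hij : i ≠ j)
    (hai : 0 < a i) (haj : 0 < a j) :
    negMulLog (∑ k ∈ s, a k) < ∑ k ∈ s, negMulLog (a k) := by
  rw [negMulLog_sum_eq]
  refine sum_lt_sum (fun k hk => neg_mul_log_le_negMulLog (ha k hk) (single_le_sum ha hk))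
    ⟨i, hi, ?_⟩
  have hlt : a i < ∑ k ∈ s, a k := by
    calc a i < a i + a j := by linarith
      _ = ∑ k ∈ {i, j}, a k := (sum_pair hij).symm
      _ ≤ ∑ k ∈ s, a k :=
        sum_le_sum_of_subset_of_nonneg (insert_subset hi (singleton_subset_iff.2 hj))
          fun k hk _ => ha k hk
  rw [negMulLog, neg_mul, neg_lt_neg_iff]
  exact mul_lt_mul_of_pos_left (log_lt_log hai hlt) hai

lemma sum_negMulLog_le_add_of_marginals {α β : Type} [Fintype α] [Fintype β] {r : α → β → ℝ}
    (hr : ∀ x y, 0 ≤ r x y) (h1 : ∑ x, ∑ y, r x y = 1) :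
    ∑ x, ∑ y, negMulLog (r x y) ≤ ∑ x, negMulLog (∑ y, r x y) + ∑ y, negMulLog (∑ x, r x y) := by
  set P := fun x => ∑ y, r x y
  set Q := fun y => ∑ x, r x y
  -- Gibbs' inequality via `log t ≤ t - 1` at `t = P x * Q y / r x y`
  have hterm : ∀ x y, negMulLog (r x y) + r x y * log (P x) + r x y * log (Q y)
      ≤ P x * Q y - r x y := by
    intro x y
    have hP : r x y ≤ P x := single_le_sum (fun y _ => hr x y) (mem_univ y)
    have hQ : r x y ≤ Q y := single_le_sum (fun x _ => hr x y) (mem_univ x)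
    rcases (hr x y).eq_or_lt with h | h
    · rw [← h]
      simpa using mul_nonneg ((hr x y).trans hP) ((hr x y).trans hQ)
    · have hPQ : 0 < P x * Q y := mul_pos (h.trans_le hP) (h.trans_le hQ)
      have := log_le_sub_one_of_pos (div_pos hPQ h)
      rw [log_div hPQ.ne' h.ne', log_mul (h.trans_le hP).ne' (h.trans_le hQ).ne'] at this
      have := mul_le_mul_of_nonneg_left this h.le
      rw [negMulLog]
      field_simp at this
      linarith
  have hPQ : ∑ x, ∑ y, (P x * Q y - r x y) = 0 := by
    simp only [sum_sub_distrib, ← sum_mul_sum, P, Q, h1]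
    rw [sum_comm, h1]
    norm_num
  have hP : ∑ x, negMulLog (P x) = ∑ x, ∑ y, -(r x y * log (P x)) :=
    sum_congr rfl fun x _ => negMulLog_sum_eq _ _
  have hQ : ∑ y, negMulLog (Q y) = ∑ x, ∑ y, -(r x y * log (Q y)) := by
    rw [sum_comm]
    exact sum_congr rfl fun y _ => negMulLog_sum_eq _ _
  have := sum_le_sum fun x (_ : x ∈ univ) => sum_le_sum fun y (_ : y ∈ univ) => hterm x y
  simp only [sum_add_distrib, sum_neg_distrib, hPQ] at this hP hQ ⊢
  linarith

section Entropy

variable {Ω : Type} [Fintype Ω] {p : Ω → ℝ} {b : ℝ} {α β : Type} [Fintype α] [Fintype β]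

lemma entH_eq_sum_negMulLog_div (X : Ω → α) :
    entH b p X = (∑ x, negMulLog (probEvent p (fun ω => X ω = x))) / log b := by
  simp only [entH, logb, negMulLog, sum_div, ← sum_neg_distrib]
  exact sum_congr rfl fun x _ => by ring

lemma entH_nonneg (hb : 1 < b) (hp : IsPMF p) (X : Ω → α) : 0 ≤ entH b p X := by
  rw [entH_eq_sum_negMulLog_div]
  exact div_nonneg (sum_nonneg fun x _ =>
    negMulLog_nonneg (probEvent_nonneg hp.1 _) (probEvent_le_one hp _)) (log_pos hb).le

lemma entH_of_subsingleton [Subsingleton α] (hp : IsPMF p) (X : Ω → α) : entH b p X = 0 := by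
  rcases isEmpty_or_nonempty α with hα | ⟨⟨x⟩⟩
  · simp [entH]
  · have h1 := sum_probEvent_eq_one hp X
    simp only [Fintype.sum_subsingleton _ x] at h1
    simp [entH_eq_sum_negMulLog_div, Fintype.sum_subsingleton _ x, h1]

lemma entH_congr (h0 : ∀ ω, 0 ≤ p ω) {X Y : Ω → α} (h : ∀ ω, 0 < p ω → X ω = Y ω) :
    entH b p X = entH b p Y := by
  have hX : ∀ x, probEvent p (fun ω => X ω = x) = probEvent p (fun ω => Y ω = x) :=
    fun x => probEvent_congr h0 fun ω hω => by rw [h ω hω]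
  simp only [entH, hX]

lemma entH_comp_le (hb : 1 < b) (h0 : ∀ ω, 0 ≤ p ω) (f : α → β) (Z : Ω → α) :
    entH b p (fun ω => f (Z ω)) ≤ entH b p Z := by
  classical
  simp only [entH_eq_sum_negMulLog_div, probEvent_comp_eq_sum f Z]
  gcongr ?_ / _
  · exact (log_pos hb).le
  calc ∑ y, negMulLog (∑ z with f z = y, probEvent p (fun ω => Z ω = z))
      ≤ ∑ y, ∑ z with f z = y, negMulLog (probEvent p (fun ω => Z ω = z)) :=
        sum_le_sum fun y _ => negMulLog_sum_le fun z _ => probEvent_nonneg h0 _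
    _ = _ := sum_fiberwise univ f _

lemma entH_comp_lt (hb : 1 < b) (h0 : ∀ ω, 0 ≤ p ω) (f : α → β) (Z : Ω → α) {ω ω' : Ω}
    (hω : 0 < p ω) (hω' : 0 < p ω') (hf : f (Z ω) = f (Z ω')) (hZ : Z ω ≠ Z ω') :
    entH b p (fun ω => f (Z ω)) < entH b p Z := by
  classical
  simp only [entH_eq_sum_negMulLog_div, probEvent_comp_eq_sum f Z]
  refine div_lt_div_of_pos_right ?_ (log_pos hb)
  calc ∑ y, negMulLog (∑ z with f z = y, probEvent p (fun ω => Z ω = z))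
      < ∑ y, ∑ z with f z = y, negMulLog (probEvent p (fun ω => Z ω = z)) := by
        refine sum_lt_sum (fun y _ => negMulLog_sum_le fun z _ => probEvent_nonneg h0 _)
          ⟨f (Z ω), mem_univ _, ?_⟩
        exact negMulLog_sum_lt (fun z _ => probEvent_nonneg h0 _) (by simp) (by simp [hf]) hZ
          (hω.trans_le (le_probEvent h0 rfl)) (hω'.trans_le (le_probEvent h0 rfl))
    _ = _ := sum_fiberwise univ f _

lemma entH_pair_eq_of_ae_eq_comp (hb : 1 < b) (h0 : ∀ ω, 0 ≤ p ω) {X : Ω → α} {Y : Ω → β}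
    (f : β → α) (hX : ∀ ω, 0 < p ω → X ω = f (Y ω)) :
    entH b p (fun ω => (X ω, Y ω)) = entH b p Y := by
  refine le_antisymm ?_ (entH_comp_le hb h0 Prod.snd fun ω => (X ω, Y ω))
  rw [entH_congr h0 fun ω hω => by rw [hX ω hω]]
  exact entH_comp_le hb h0 (fun y => (f y, y)) Y

lemma exists_ae_eq_comp_of_condH_eq_zero (hb : 1 < b) (hp : IsPMF p) {X : Ω → α} {Y : Ω → β}
    (h : condH b p X Y = 0) : ∃ f : β → α, ∀ ω, 0 < p ω → X ω = f (Y ω) := by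
  classical
  have hfun : ∀ ω ω', 0 < p ω → 0 < p ω' → Y ω = Y ω' → X ω = X ω' := by
    intro ω ω' hω hω' hY
    by_contra hX
    have := entH_comp_lt hb hp.1 Prod.snd (fun ω => (X ω, Y ω)) hω hω' hY
      fun e => hX (congrArg Prod.fst e)
    rw [condH] at h
    linarith
  obtain ⟨ω₀, -⟩ := nonempty_of_sum_ne_zero (s := univ) (f := p) (by simp [hp.2])
  refine ⟨fun y => if hy : ∃ ω, 0 < p ω ∧ Y ω = y then X hy.choose else X ω₀, fun ω hω => ?_⟩
  have hy : ∃ ω', 0 < p ω' ∧ Y ω' = Y ω := ⟨ω, hω, rfl⟩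
  simp only [dif_pos hy]
  exact hfun _ _ hω hy.choose_spec.1 hy.choose_spec.2.symm

lemma entH_pair_le (hb : 1 < b) (hp : IsPMF p) (X : Ω → α) (Y : Ω → β) :
    entH b p (fun ω => (X ω, Y ω)) ≤ entH b p X + entH b p Y := by
  set r := fun x y => probEvent p (fun ω => (X ω, Y ω) = (x, y))
  have hX : ∀ x, probEvent p (fun ω => X ω = x) = ∑ y, r x y := fun x => by
    rw [probEvent_eq_sum_and Y]
    exact sum_congr rfl fun y _ => probEvent_congr hp.1 fun ω _ => by simp [and_comm]
  have hY : ∀ y, probEvent p (fun ω => Y ω = y) = ∑ x, r x y := fun y => by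
    rw [probEvent_eq_sum_and X]
    exact sum_congr rfl fun x _ => probEvent_congr hp.1 fun ω _ => by simp
  have h1 : ∑ x, ∑ y, r x y = 1 := by
    rw [← Fintype.sum_prod_type']
    exact sum_probEvent_eq_one hp _
  simp only [entH_eq_sum_negMulLog_div, ← add_div, hX, hY, Fintype.sum_prod_type]
  exact div_le_div_of_nonneg_right
    (sum_negMulLog_le_add_of_marginals (fun x y => probEvent_nonneg hp.1 _) h1) (log_pos hb).le

lemma entH_pi_le_sum {ι : Type} [DecidableEq ι] (hb : 1 < b) (hp : IsPMF p) (s : Finset ι)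
    (A : ι → Ω → α) :
    entH b p (fun ω (n : s) => A n ω) ≤ ∑ n ∈ s, entH b p (A n) := by
  induction s using Finset.induction_on with
  | empty => simp [entH_of_subsingleton hp]
  | insert a s ha ih =>
    let glue : α × (s → α) → ↥(insert a s) → α := fun u n =>
      if h : n.1 = a then u.1 else u.2 ⟨n.1, (mem_insert.1 n.2).resolve_left h⟩
    have hglue (ω : Ω) : glue (A a ω, fun n : s => A n ω) = fun n : ↥(insert a s) => A n ω := by
      funext n
      by_cases h : n.1 = a <;> simp [glue, h]
    calc entH b p (fun ω (n : ↥(insert a s)) => A n ω)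
        ≤ entH b p (fun ω => (A a ω, fun n : s => A n ω)) := by
          simpa only [hglue] using entH_comp_le hb hp.1 glue fun ω => (A a ω, fun n : s => A n ω)
      _ ≤ entH b p (A a) + ∑ n ∈ s, entH b p (A n) := (entH_pair_le hb hp _ _).trans (by linarith)
      _ = ∑ n ∈ insert a s, entH b p (A n) := by rw [sum_insert ha]

end Entropy

lemma entH_le_sum_entH_sdiff {Ω ι σ τ υ : Type} [Fintype Ω] [DecidableEq ι] [Fintype σ]
    [Fintype τ] [Fintype υ] {b : ℝ} {p : Ω → ℝ} (hb : 1 < b) (hp : IsPMF p) {E X : Finset ι}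
    (W : Ω → σ) (S : ι → Ω → τ) (A : ι → Ω → υ)
    (hdet : ∀ n ∈ X, condH b p (A n) (S n) = 0)
    (hrec : condH b p W (fun ω (n : E) => A n ω) = 0)
    (hsec : mutI b p W (fun ω (n : X) => S n ω) = 0) :
    entH b p W ≤ ∑ n ∈ E \ X, entH b p (A n) := by
  choose f hf using fun n : X => exists_ae_eq_comp_of_condH_eq_zero hb hp (hdet n n.2)
  obtain ⟨g, hg⟩ := exists_ae_eq_comp_of_condH_eq_zero hb hp hrec
  let SX : Ω → X → τ := fun ω n => S n ω
  let AC : Ω → ↥(E \ X) → υ := fun ω n => A n ω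
  let F : (X → τ) × (↥(E \ X) → υ) → σ := fun u => g fun n =>
    if h : n.1 ∈ X then f ⟨n, h⟩ (u.1 ⟨n, h⟩) else u.2 ⟨n, mem_sdiff.2 ⟨n.2, h⟩⟩
  have hF : ∀ ω, 0 < p ω → W ω = F (SX ω, AC ω) := by
    intro ω hω
    rw [hg ω hω]
    congr 1
    funext n
    by_cases h : n.1 ∈ X
    · simp [h, SX, ← hf ⟨n, h⟩ ω hω]
    · simp [h, AC]
  have hmono : entH b p (fun ω => (W ω, SX ω))
      ≤ entH b p (fun ω => (W ω, (SX ω, AC ω))) :=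
    entH_comp_le hb hp.1 (fun u : σ × (X → τ) × (↥(E \ X) → υ) => (u.1, u.2.1))
      fun ω => (W ω, (SX ω, AC ω))
  have hWdet := entH_pair_eq_of_ae_eq_comp hb hp.1 F hF
  have hsubadd := entH_pair_le hb hp SX AC
  have hAC := entH_pi_le_sum hb hp (E \ X) A
  rw [mutI] at hsec
  linarith

lemma exists_subset_card_eq_mul_sum_sdiff_le {ι : Type} [DecidableEq ι] (f : ι → ℝ) {t : ℕ} :
    ∀ {E : Finset ι}, t ≤ E.card →
      ∃ X ⊆ E, X.card = t ∧ (E.card : ℝ) * ∑ n ∈ E \ X, f n ≤ (E.card - t) * ∑ n ∈ E, f n := by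
  induction t with
  | zero => exact fun _ => ⟨∅, empty_subset _, card_empty, by simp⟩
  | succ t ih =>
    intro E ht
    obtain ⟨a, ha, hmax⟩ := exists_max_image E f (card_pos.1 (by omega))
    have hcard : (E.erase a).card = E.card - 1 := card_erase_of_mem ha
    obtain ⟨X, hXE, hXcard, hX⟩ := ih (E := E.erase a) (by omega)
    have haX : a ∉ X := fun h => by simpa using hXE h
    refine ⟨insert a X, insert_subset ha (hXE.trans (erase_subset a E)), by
      rw [card_insert_of_notMem haX, hXcard], ?_⟩
    rw [sdiff_insert, ← erase_sdiff_comm]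
    have hsum := sum_erase_add E f ha
    have hrest : ∑ n ∈ E.erase a \ X, f n ≤ ((E.card : ℝ) - 1 - t) * f a := by
      have := sum_le_card_nsmul (E.erase a \ X) f (f a) fun n hn =>
        hmax n (mem_of_mem_erase (mem_sdiff.1 hn).1)
      rwa [card_sdiff_of_subset hXE, hcard, hXcard, nsmul_eq_mul, Nat.cast_sub (by omega),
        Nat.cast_sub (by omega), Nat.cast_one] at this
    rw [hcard, Nat.cast_sub (by omega), Nat.cast_one] at hX
    push_cast
    linear_combination hX + hrest + ((E.card : ℝ) - 1 - t) * hsum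

theorem download_cost_lower_bound_general
    {Ω σ τ υ : Type} [Fintype Ω] [Fintype σ] [Fintype τ] [Fintype υ]
    (b : ℝ) (hb : 1 < b) (p : Ω → ℝ) (hp : IsPMF p)
    {N : ℕ} (D : Finset (Fin N)) (Rr Kc : ℕ) (L : ℝ)
    (hKR : Kc ≤ Rr)
    (hcard : Rr - Kc ≤ N - D.card)
    (W : Ω → σ) (S : Fin N → Ω → τ) (A : Fin N → Ω → υ)
    (hL : entH b p W = L)
    (hdet : ∀ n ∈ Finset.univ \ D, condH b p (A n) (S n) = 0)
    (hrec : condH b p W (fun ω => (fun n : ((Finset.univ \ D : Finset (Fin N)) : Finset (Fin N)) => A n ω)) = 0)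
    (hsec : ∀ X' : Finset (Fin N), X' ⊆ Finset.univ \ D → X'.card = Rr - Kc →
      mutI b p W (fun ω => (fun n : X' => S n ω)) = 0) :
    L * ((N : ℝ) - D.card) / ((N : ℝ) - Rr + Kc - D.card)
      ≤ ∑ n ∈ Finset.univ \ D, entH b p (A n) := by
  have hE : (univ \ D).card = N - D.card := by rw [card_univ_sdiff, Fintype.card_fin]
  obtain ⟨X, hXE, hXcard, hX⟩ := exists_subset_card_eq_mul_sum_sdiff_le
    (fun n => entH b p (A n)) (E := univ \ D) (t := Rr - Kc) (hE ▸ hcard)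
  have hLX : L ≤ ∑ n ∈ (univ \ D) \ X, entH b p (A n) :=
    hL ▸ entH_le_sum_entH_sdiff hb hp W S A (fun n hn => hdet n (hXE hn)) hrec
      (hsec X hXE hXcard)
  have hm : ((univ \ D).card : ℝ) = N - D.card := by
    rw [hE, Nat.cast_sub (by simpa using card_le_univ D)]
  have hden : (N : ℝ) - Rr + Kc - D.card = (univ \ D).card - (Rr - Kc : ℕ) := by
    rw [hm, Nat.cast_sub hKR]
    ring
  rw [← hm, hden]
  -- in the degenerate case `|E| = R_r - K_c` the left side is a division by zero, hence `0`
  rcases (sub_nonneg.2 (Nat.cast_le.2 (hE ▸ hcard) : ((Rr - Kc : ℕ) : ℝ) ≤ _)).eq_or_lt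
    with hzero | hpos
  · rw [← hzero, div_zero]
    exact sum_nonneg fun n _ => entH_nonneg hb hp (A n)
  · rw [div_le_iff₀ hpos]
    linarith [mul_le_mul_of_nonneg_left hLX (Nat.cast_nonneg (α := ℝ) (univ \ D).card)]

/-- Download cost lower bound from secrecy: suppose `H(W) = L`, the answers
satisfy `H(A_n | S_n) = 0` for each available server `n`, `W` is recoverable from
the answers of the available servers `[N]∖D`, and the storage at any
`R_r - K_c` available servers is independent of `W`. Then
`∑_{n∈[N]∖D} H(A_n) ≥ L·(N-|D|)/(N-R_r+K_c-|D|)`. -/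
theorem download_cost_lower_bound
    {Ω σ τ υ : Type} [Fintype Ω] [Fintype σ] [Fintype τ] [Fintype υ]
    (b : ℝ) (hb : 1 < b) (p : Ω → ℝ) (hp : IsPMF p)
    {N : ℕ} (D : Finset (Fin N)) (Rr Kc : ℕ) (L : ℝ)
    (hK : 0 < Kc) (hKR : Kc ≤ Rr) (hRN : Rr ≤ N)
    (hcard : Rr - Kc ≤ N - D.card)
    (W : Ω → σ) (S : Fin N → Ω → τ) (A : Fin N → Ω → υ)
    (hL : entH b p W = L)
    (hdet : ∀ n ∈ Finset.univ \ D, condH b p (A n) (S n) = 0)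
    (hrec : condH b p W (fun ω => (fun n : ((Finset.univ \ D : Finset (Fin N)) : Finset (Fin N)) => A n ω)) = 0)
    (hsec : ∀ X' : Finset (Fin N), X' ⊆ Finset.univ \ D → X'.card = Rr - Kc →
      mutI b p W (fun ω => (fun n : X' => S n ω)) = 0) :
    L * ((N : ℝ) - D.card) / ((N : ℝ) - Rr + Kc - D.card)
      ≤ ∑ n ∈ Finset.univ \ D, entH b p (A n) :=
  download_cost_lower_bound_general b hb p hp D Rr Kc L hKR hcard W S A hL hdet hrec hsec
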